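/- arXiv:2111.08470 — 4 statements merged into one kernel-verified Lean document; each statement's English description precedes it below -/
import Mathlib

section
/- For a bounded measurable function w : [t₀, ∞) → ℝⁿ with ‖w(s)‖ ≤ K, the map t ↦ ∫_{t₀}^t w(s)/√(t-s) ds is 1/2-Hölder continuous: for all t₀ < t₁ < t₂, ‖∫_{t₀}^{t₂} w(s)/√(t₂-s) ds − ∫_{t₀}^{t₁} w(s)/√(t₁-s) ds‖ ≤ 6K √(t₂ − t₁). -/
open MeasureTheory intervalIntegral Set
open scoped Interval

lemma ker_eq (x : ℝ) : (Real.sqrt x)⁻¹ = x ^ (-(1/2) : ℝ) := by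
  rcases lt_trichotomy x 0 with h | h | h
  · rw [Real.sqrt_eq_zero_of_nonpos h.le, inv_zero, Real.rpow_def_of_neg h]
    have : Real.cos (-(1/2) * Real.pi) = 0 := by
      rw [show (-(1/2) : ℝ) * Real.pi = -(Real.pi/2) by ring, Real.cos_neg,
        Real.cos_pi_div_two]
    rw [this, mul_zero]
  · rw [h]; simp [Real.zero_rpow (by norm_num : (-(1/2):ℝ) ≠ 0)]
  · rw [Real.rpow_neg h.le, ← Real.sqrt_eq_rpow]

lemma ker_intble (t a b : ℝ) :
    IntervalIntegrable (fun s => (Real.sqrt (t - s))⁻¹) volume a b := by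
  have h := (intervalIntegrable_rpow' (a := t - a) (b := t - b)
    (r := (-(1/2) : ℝ)) (by norm_num)).comp_sub_left t
  simp only [sub_sub_cancel] at h
  simpa only [ker_eq] using h

lemma ker_integral (t a b : ℝ) (hab : a ≤ b) (hbt : b ≤ t) :
    ∫ s in a..b, (Real.sqrt (t - s))⁻¹ =
      2 * Real.sqrt (t - a) - 2 * Real.sqrt (t - b) := by
  have h1 : ∫ s in a..b, (Real.sqrt (t - s))⁻¹
      = ∫ s in a..b, (fun x => x ^ (-(1/2) : ℝ)) (t - s) := by
    simp only [ker_eq]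
  rw [h1, intervalIntegral.integral_comp_sub_left (fun x => x ^ (-(1/2) : ℝ)) t,
    integral_rpow (Or.inl (by norm_num))]
  have h2 : (-(1/2) : ℝ) + 1 = 1/2 := by norm_num
  rw [h2, ← Real.sqrt_eq_rpow, ← Real.sqrt_eq_rpow]
  ring

section main
variable {n : ℕ} {K : ℝ} {w : ℝ → EuclideanSpace ℝ (Fin n)}

lemma kw_intble (hw : Measurable w) (hbound : ∀ s, ‖w s‖ ≤ K)
    (t a b : ℝ) :
    IntervalIntegrable (fun s => (Real.sqrt (t - s))⁻¹ • w s) volume a b := by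
  have hK0 : 0 ≤ K := le_trans (norm_nonneg _) (hbound a)
  refine ((ker_intble t a b).const_mul K).mono_fun ?_ ?_
  · exact (((measurable_const.sub measurable_id).sqrt.inv).smul hw).aestronglyMeasurable
  · refine Filter.Eventually.of_forall fun s => ?_
    have h0 : (0:ℝ) ≤ (Real.sqrt (t - s))⁻¹ := inv_nonneg.2 (Real.sqrt_nonneg _)
    show ‖(Real.sqrt (t - s))⁻¹ • w s‖ ≤ ‖K * (Real.sqrt (t - s))⁻¹‖
    rw [norm_smul, Real.norm_eq_abs, Real.norm_eq_abs, abs_of_nonneg h0,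
      abs_of_nonneg (mul_nonneg hK0 h0), mul_comm K]
    exact mul_le_mul_of_nonneg_left (hbound s) h0
end main

theorem holder_continuity_of_basset_integral
    (n : ℕ) (t₀ K : ℝ) (hK : 0 < K)
    (w : ℝ → EuclideanSpace ℝ (Fin n))
    (hw : Measurable w)
    (hbound : ∀ s, ‖w s‖ ≤ K) :
    ∀ t₁ t₂, t₀ < t₁ → t₁ < t₂ →
      ‖(∫ s in t₀..t₂, (Real.sqrt (t₂ - s))⁻¹ • w s) -
        ∫ s in t₀..t₁, (Real.sqrt (t₁ - s))⁻¹ • w s‖ ≤ 6 * K * Real.sqrt (t₂ - t₁) := by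
  intro t₁ t₂ h01 h12
  have I2a := kw_intble hw hbound t₂ t₀ t₁
  have I2b := kw_intble hw hbound t₂ t₁ t₂
  have I1 := kw_intble hw hbound t₁ t₀ t₁
  -- split
  have hsplit : (∫ s in t₀..t₂, (Real.sqrt (t₂ - s))⁻¹ • w s)
      = (∫ s in t₀..t₁, (Real.sqrt (t₂ - s))⁻¹ • w s)
        + ∫ s in t₁..t₂, (Real.sqrt (t₂ - s))⁻¹ • w s :=
    (intervalIntegral.integral_add_adjacent_intervals I2a I2b).symm
  have hA : (∫ s in t₀..t₁, (Real.sqrt (t₂ - s))⁻¹ • w s)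
      - (∫ s in t₀..t₁, (Real.sqrt (t₁ - s))⁻¹ • w s)
      = ∫ s in t₀..t₁, ((Real.sqrt (t₂ - s))⁻¹ - (Real.sqrt (t₁ - s))⁻¹) • w s := by
    rw [← intervalIntegral.integral_sub I2a I1]
    congr 1; ext s; rw [sub_smul]
  have key : (∫ s in t₀..t₂, (Real.sqrt (t₂ - s))⁻¹ • w s) -
        (∫ s in t₀..t₁, (Real.sqrt (t₁ - s))⁻¹ • w s)
      = (∫ s in t₀..t₁, ((Real.sqrt (t₂ - s))⁻¹ - (Real.sqrt (t₁ - s))⁻¹) • w s)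
        + ∫ s in t₁..t₂, (Real.sqrt (t₂ - s))⁻¹ • w s := by
    rw [hsplit, ← hA]; abel
  rw [key]
  -- Bound B
  have hBnorm : ‖∫ s in t₁..t₂, (Real.sqrt (t₂ - s))⁻¹ • w s‖
      ≤ 2 * K * Real.sqrt (t₂ - t₁) := by
    have h := intervalIntegral.norm_integral_le_abs_of_norm_le
      (f := fun s => (Real.sqrt (t₂ - s))⁻¹ • w s)
      (g := fun s => K * (Real.sqrt (t₂ - s))⁻¹) (μ := volume) (a := t₁) (b := t₂)
      (Filter.Eventually.of_forall fun s => by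
        have h0 : (0:ℝ) ≤ (Real.sqrt (t₂ - s))⁻¹ := inv_nonneg.2 (Real.sqrt_nonneg _)
        show ‖(Real.sqrt (t₂ - s))⁻¹ • w s‖ ≤ K * (Real.sqrt (t₂ - s))⁻¹
        rw [norm_smul, Real.norm_eq_abs, abs_of_nonneg h0, mul_comm K]
        exact mul_le_mul_of_nonneg_left (hbound s) h0)
      ((ker_intble t₂ t₁ t₂).const_mul K)
    refine h.trans ?_
    rw [intervalIntegral.integral_const_mul, ker_integral t₂ t₁ t₂ h12.le le_rfl]
    rw [sub_self, Real.sqrt_zero, mul_zero, sub_zero, abs_of_nonneg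
      (mul_nonneg hK.le (mul_nonneg (by norm_num) (Real.sqrt_nonneg _)))]
    ring_nf; exact le_refl _
  -- Bound A
  have hAnorm : ‖∫ s in t₀..t₁, ((Real.sqrt (t₂ - s))⁻¹ - (Real.sqrt (t₁ - s))⁻¹) • w s‖
      ≤ 2 * K * Real.sqrt (t₂ - t₁) := by
    have hker : IntervalIntegrable
        (fun s => K * ((Real.sqrt (t₁ - s))⁻¹ - (Real.sqrt (t₂ - s))⁻¹)) volume t₀ t₁ :=
      (((ker_intble t₁ t₀ t₁).sub (ker_intble t₂ t₀ t₁))).const_mul K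
    have hae : ∀ᵐ s ∂volume.restrict (Ι t₀ t₁),
        ‖((Real.sqrt (t₂ - s))⁻¹ - (Real.sqrt (t₁ - s))⁻¹) • w s‖
          ≤ K * ((Real.sqrt (t₁ - s))⁻¹ - (Real.sqrt (t₂ - s))⁻¹) := by
      have hne : ∀ᵐ s ∂volume.restrict (Ι t₀ t₁), s ≠ t₁ :=
        ae_restrict_of_ae (by
          rw [MeasureTheory.ae_iff]
          simpa using Real.volume_singleton (a := t₁))
      have hmem : ∀ᵐ s ∂volume.restrict (Ι t₀ t₁), s ∈ Ι t₀ t₁ :=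
        ae_restrict_mem measurableSet_uIoc
      filter_upwards [hne, hmem] with s hs hs'
      rw [Set.uIoc_of_le h01.le] at hs'
      have hst1 : s < t₁ := lt_of_le_of_ne hs'.2 hs
      have h1pos : 0 < Real.sqrt (t₁ - s) := Real.sqrt_pos.2 (by linarith)
      have h2pos : 0 < Real.sqrt (t₂ - s) := Real.sqrt_pos.2 (by linarith)
      have hle : (Real.sqrt (t₂ - s))⁻¹ ≤ (Real.sqrt (t₁ - s))⁻¹ := by
        apply inv_anti₀ h1pos
        exact Real.sqrt_le_sqrt (by linarith)
      rw [norm_smul, Real.norm_eq_abs, abs_of_nonpos (by linarith), mul_comm K _, neg_sub]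
      exact mul_le_mul_of_nonneg_left (hbound s) (by linarith)
    have h := intervalIntegral.norm_integral_le_abs_of_norm_le hae hker
    refine h.trans ?_
    rw [intervalIntegral.integral_const_mul, intervalIntegral.integral_sub
      (ker_intble t₁ t₀ t₁) (ker_intble t₂ t₀ t₁),
      ker_integral t₁ t₀ t₁ h01.le le_rfl,
      ker_integral t₂ t₀ t₁ h01.le h12.le]
    rw [sub_self, Real.sqrt_zero, mul_zero, sub_zero]
    have hmono : Real.sqrt (t₁ - t₀) ≤ Real.sqrt (t₂ - t₀) :=
      Real.sqrt_le_sqrt (by linarith)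
    have habs : |K * (2 * Real.sqrt (t₁ - t₀) -
        (2 * Real.sqrt (t₂ - t₀) - 2 * Real.sqrt (t₂ - t₁)))|
        ≤ K * (2 * Real.sqrt (t₂ - t₁)) := by
      rw [abs_mul, abs_of_nonneg hK.le]
      refine mul_le_mul_of_nonneg_left ?_ hK.le
      rw [abs_le]
      constructor
      · have hsub : Real.sqrt (t₂ - t₀) ≤ Real.sqrt (t₁ - t₀) + Real.sqrt (t₂ - t₁) := by
          nlinarith [Real.sq_sqrt (show (0:ℝ) ≤ t₂ - t₀ by linarith),
            Real.sq_sqrt (show (0:ℝ) ≤ t₁ - t₀ by linarith),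
            Real.sq_sqrt (show (0:ℝ) ≤ t₂ - t₁ by linarith),
            Real.sqrt_nonneg (t₂ - t₀), Real.sqrt_nonneg (t₁ - t₀),
            Real.sqrt_nonneg (t₂ - t₁),
            mul_nonneg (Real.sqrt_nonneg (t₁ - t₀)) (Real.sqrt_nonneg (t₂ - t₁))]
        linarith
      · linarith
    calc _ ≤ K * (2 * Real.sqrt (t₂ - t₁)) := habs
      _ = 2 * K * Real.sqrt (t₂ - t₁) := by ring
  calc ‖_ + _‖ ≤ _ + _ := norm_add_le _ _
    _ ≤ 2 * K * Real.sqrt (t₂ - t₁) + 2 * K * Real.sqrt (t₂ - t₁) :=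
        add_le_add hAnorm hBnorm
    _ ≤ 6 * K * Real.sqrt (t₂ - t₁) := by
        nlinarith [Real.sqrt_nonneg (t₂ - t₁), hK.le]
end

section
/- If w(t₀) ≠ 0 ∈ ℝⁿ and w is 1/2-Hölder continuous at t₀, then the function F(t) = ∫_{t₀}^t w(s)/√(t-s) ds is not differentiable at t₀: the difference quotient F(t)/(t-t₀) tends to infinity in norm as t → t₀⁺. -/
open MeasureTheory intervalIntegral Set Filter Topology

theorem basset_integral_not_differentiable_at_t0
    (n : ℕ) (t₀ c ε : ℝ) (hc : 0 < c) (hε : 0 < ε)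
    (w : ℝ → EuclideanSpace ℝ (Fin n))
    (hw : Measurable w)
    (hw0 : w t₀ ≠ 0)
    (hhold : ∀ s ∈ Icc t₀ (t₀ + ε), ‖w s - w t₀‖ ≤ c * Real.sqrt (s - t₀)) :
    Tendsto (fun t => ‖(t - t₀)⁻¹ • ∫ s in t₀..t, (Real.sqrt (t - s))⁻¹ • w s‖)
      (𝓝[>] t₀) atTop := by
  have hw0' : (0:ℝ) < ‖w t₀‖ := norm_pos_iff.mpr hw0
  have key : ∀ t ∈ Ioc t₀ (t₀ + ε),
      2 * ‖w t₀‖ * (Real.sqrt (t - t₀))⁻¹ - 2 * c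
        ≤ ‖(t - t₀)⁻¹ • ∫ s in t₀..t, (Real.sqrt (t - s))⁻¹ • w s‖ := by
    intro t ht
    obtain ⟨ht1, ht2⟩ := ht
    set δ := t - t₀ with hδdef
    have hδ : 0 < δ := sub_pos.mpr ht1
    have hsqδ : 0 < Real.sqrt δ := Real.sqrt_pos.mpr hδ
    have huIoc : uIoc t₀ t = Ioc t₀ t := uIoc_of_le ht1.le
    -- integrability of s ↦ (√(t - s))⁻¹ on [t₀, t]
    have hint1 : IntervalIntegrable (fun s => (Real.sqrt (t - s))⁻¹) volume t₀ t := by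
      have h1 : IntervalIntegrable (fun x : ℝ => x ^ (-(1/2) : ℝ)) volume 0 δ :=
        intervalIntegral.intervalIntegrable_rpow' (by norm_num)
      have h2 := (h1.comp_sub_left t).symm
      have ht0 : t - δ = t₀ := by simp [hδdef]
      rw [sub_zero, ht0] at h2
      apply h2.mono_fun
      · exact ((Real.continuous_sqrt.comp
          (continuous_const.sub continuous_id)).measurable.inv).aestronglyMeasurable
      · filter_upwards [ae_restrict_mem measurableSet_uIoc] with s hs
        rw [huIoc] at hs
        have hts : 0 ≤ t - s := sub_nonneg.mpr hs.2
        have : (Real.sqrt (t - s))⁻¹ = (t - s) ^ (-(1/2) : ℝ) := by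
          rw [Real.sqrt_eq_rpow, ← Real.rpow_neg hts]
        rw [this]
    -- integrability of the full integrand
    have hmeas : AEStronglyMeasurable (fun s => (Real.sqrt (t - s))⁻¹ • w s)
        (volume.restrict (uIoc t₀ t)) :=
      (((Real.continuous_sqrt.comp
          (continuous_const.sub continuous_id)).measurable.inv).smul hw).aestronglyMeasurable
    have hint : IntervalIntegrable (fun s => (Real.sqrt (t - s))⁻¹ • w s) volume t₀ t := by
      apply (hint1.const_mul (‖w t₀‖ + c * Real.sqrt ε)).mono_fun hmeas
      filter_upwards [ae_restrict_mem measurableSet_uIoc] with s hs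
      rw [huIoc] at hs
      have hts : 0 ≤ (Real.sqrt (t - s))⁻¹ := inv_nonneg.mpr (Real.sqrt_nonneg _)
      have hsI : s ∈ Icc t₀ (t₀ + ε) := ⟨hs.1.le, hs.2.trans ht2⟩
      have hb : ‖w s‖ ≤ ‖w t₀‖ + c * Real.sqrt ε := by
        have h1 := hhold s hsI
        have h2 : Real.sqrt (s - t₀) ≤ Real.sqrt ε :=
          Real.sqrt_le_sqrt (by linarith [hsI.2])
        have := norm_le_norm_add_norm_sub' (w s) (w t₀)
        nlinarith [norm_nonneg (w s - w t₀)]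
      rw [norm_smul, Real.norm_eq_abs, abs_of_nonneg hts, Real.norm_eq_abs]
      calc (Real.sqrt (t - s))⁻¹ * ‖w s‖
          ≤ (Real.sqrt (t - s))⁻¹ * (‖w t₀‖ + c * Real.sqrt ε) := by
            apply mul_le_mul_of_nonneg_left hb hts
        _ ≤ |(‖w t₀‖ + c * Real.sqrt ε) * (Real.sqrt (t - s))⁻¹| := by
            rw [mul_comm]; exact le_abs_self _
    -- value of ∫ (√(t-s))⁻¹
    have hval : (∫ s in t₀..t, (Real.sqrt (t - s))⁻¹) = 2 * Real.sqrt δ := by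
      have h1 : (∫ s in t₀..t, (Real.sqrt (t - s))⁻¹)
          = ∫ x in (t - t)..(t - t₀), (Real.sqrt x)⁻¹ :=
        intervalIntegral.integral_comp_sub_left (fun x => (Real.sqrt x)⁻¹) t
      rw [h1, sub_self, ← hδdef]
      have h2 : (∫ x in (0:ℝ)..δ, (Real.sqrt x)⁻¹) = ∫ x in (0:ℝ)..δ, x ^ (-(1/2) : ℝ) := by
        apply intervalIntegral.integral_congr
        intro x hx
        rw [uIcc_of_le hδ.le] at hx
        show (Real.sqrt x)⁻¹ = x ^ (-(1/2) : ℝ)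
        rw [Real.sqrt_eq_rpow, ← Real.rpow_neg hx.1]
      rw [h2, integral_rpow (Or.inl (by norm_num))]
      rw [show (-(1/2) : ℝ) + 1 = 1/2 by norm_num, Real.zero_rpow (by norm_num),
        ← Real.sqrt_eq_rpow]
      ring
    -- split the integral
    have hconst : IntervalIntegrable (fun s => (Real.sqrt (t - s))⁻¹ • w t₀) volume t₀ t :=
      ⟨hint1.1.smul_const _, hint1.2.smul_const _⟩
    have hdiff : IntervalIntegrable (fun s => (Real.sqrt (t - s))⁻¹ • (w s - w t₀))
        volume t₀ t := by
      have := hint.sub hconst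
      simpa [smul_sub] using this
    have hsplit : (∫ s in t₀..t, (Real.sqrt (t - s))⁻¹ • w s)
        = (∫ s in t₀..t, (Real.sqrt (t - s))⁻¹ • w t₀)
          + ∫ s in t₀..t, (Real.sqrt (t - s))⁻¹ • (w s - w t₀) := by
      rw [← intervalIntegral.integral_add hconst hdiff]
      congr 1
      funext s
      simp [smul_sub]
    have hA : (∫ s in t₀..t, (Real.sqrt (t - s))⁻¹ • w t₀)
        = (2 * Real.sqrt δ) • w t₀ := by
      rw [intervalIntegral.integral_smul_const, hval]
    have hAnorm : ‖(∫ s in t₀..t, (Real.sqrt (t - s))⁻¹ • w t₀)‖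
        = 2 * Real.sqrt δ * ‖w t₀‖ := by
      rw [hA, norm_smul, Real.norm_eq_abs, abs_of_nonneg (by positivity)]
    have hBnorm : ‖∫ s in t₀..t, (Real.sqrt (t - s))⁻¹ • (w s - w t₀)‖
        ≤ 2 * c * δ := by
      have hb : ‖∫ s in t₀..t, (Real.sqrt (t - s))⁻¹ • (w s - w t₀)‖
          ≤ |∫ s in t₀..t, (c * Real.sqrt δ) * (Real.sqrt (t - s))⁻¹| := by
        apply intervalIntegral.norm_integral_le_abs_of_norm_le _ (hint1.const_mul _)
        filter_upwards [ae_restrict_mem measurableSet_uIoc] with s hs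
        rw [huIoc] at hs
        have hts : 0 ≤ (Real.sqrt (t - s))⁻¹ := inv_nonneg.mpr (Real.sqrt_nonneg _)
        have hsI : s ∈ Icc t₀ (t₀ + ε) := ⟨hs.1.le, hs.2.trans ht2⟩
        have h1 := hhold s hsI
        have h2 : Real.sqrt (s - t₀) ≤ Real.sqrt δ :=
          Real.sqrt_le_sqrt (by simp [hδdef]; linarith [hs.2])
        rw [norm_smul, Real.norm_eq_abs, abs_of_nonneg hts]
        calc (Real.sqrt (t - s))⁻¹ * ‖w s - w t₀‖
            ≤ (Real.sqrt (t - s))⁻¹ * (c * Real.sqrt δ) := by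
              apply mul_le_mul_of_nonneg_left _ hts
              calc ‖w s - w t₀‖ ≤ c * Real.sqrt (s - t₀) := h1
                _ ≤ c * Real.sqrt δ := mul_le_mul_of_nonneg_left h2 hc.le
          _ = (c * Real.sqrt δ) * (Real.sqrt (t - s))⁻¹ := mul_comm _ _
      rw [intervalIntegral.integral_const_mul, hval] at hb
      calc ‖∫ s in t₀..t, (Real.sqrt (t - s))⁻¹ • (w s - w t₀)‖
          ≤ |c * Real.sqrt δ * (2 * Real.sqrt δ)| := hb
        _ = 2 * c * δ := by
            rw [abs_of_nonneg (by positivity)]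
            rw [show c * Real.sqrt δ * (2 * Real.sqrt δ)
              = 2 * c * (Real.sqrt δ * Real.sqrt δ) by ring, Real.mul_self_sqrt hδ.le]
    -- combine
    have hF : 2 * Real.sqrt δ * ‖w t₀‖ - 2 * c * δ
        ≤ ‖∫ s in t₀..t, (Real.sqrt (t - s))⁻¹ • w s‖ := by
      rw [hsplit]
      have h := norm_sub_le ((∫ s in t₀..t, (Real.sqrt (t - s))⁻¹ • w t₀)
        + ∫ s in t₀..t, (Real.sqrt (t - s))⁻¹ • (w s - w t₀))
        (∫ s in t₀..t, (Real.sqrt (t - s))⁻¹ • (w s - w t₀))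
      simp only [add_sub_cancel_right] at h
      rw [hAnorm] at h
      linarith
    rw [norm_smul, Real.norm_eq_abs, abs_of_nonneg (inv_nonneg.mpr hδ.le)]
    have hδ0 : δ ≠ 0 := hδ.ne'
    have hs0 : Real.sqrt δ ≠ 0 := hsqδ.ne'
    have hinv : δ⁻¹ * Real.sqrt δ = (Real.sqrt δ)⁻¹ := by
      have hms := Real.mul_self_sqrt hδ.le
      field_simp
      exact Real.sq_sqrt hδ.le
    have h1 : δ⁻¹ * (2 * Real.sqrt δ * ‖w t₀‖ - 2 * c * δ)
        = 2 * ‖w t₀‖ * (Real.sqrt δ)⁻¹ - 2 * c := by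
      rw [mul_sub,
        show δ⁻¹ * (2 * Real.sqrt δ * ‖w t₀‖) = 2 * ‖w t₀‖ * (δ⁻¹ * Real.sqrt δ) by ring,
        hinv, show δ⁻¹ * (2 * c * δ) = 2 * c * (δ⁻¹ * δ) by ring,
        inv_mul_cancel₀ hδ0, mul_one]
    calc 2 * ‖w t₀‖ * (Real.sqrt δ)⁻¹ - 2 * c
        = δ⁻¹ * (2 * Real.sqrt δ * ‖w t₀‖ - 2 * c * δ) := h1.symm
      _ ≤ δ⁻¹ * ‖∫ s in t₀..t, (Real.sqrt (t - s))⁻¹ • w s‖ :=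
          mul_le_mul_of_nonneg_left hF (inv_nonneg.mpr hδ.le)
  -- pass to the limit
  have hmem : Ioc t₀ (t₀ + ε) ∈ 𝓝[>] t₀ :=
    Ioc_mem_nhdsGT (lt_add_of_pos_right t₀ hε)
  apply tendsto_atTop_mono' _ (Filter.eventually_of_mem hmem key)
  have h1 : Tendsto (fun t => Real.sqrt (t - t₀)) (𝓝[>] t₀) (𝓝[>] 0) := by
    rw [tendsto_nhdsWithin_iff]
    constructor
    · have hcont : Continuous (fun t : ℝ => Real.sqrt (t - t₀)) :=
        Real.continuous_sqrt.comp (continuous_id.sub continuous_const)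
      have h0 := hcont.tendsto t₀
      simp only [sub_self, Real.sqrt_zero] at h0
      exact h0.mono_left nhdsWithin_le_nhds
    · filter_upwards [self_mem_nhdsWithin] with t ht
      exact Real.sqrt_pos.mpr (sub_pos.mpr ht)
  have h2 : Tendsto (fun t => (Real.sqrt (t - t₀))⁻¹) (𝓝[>] t₀) atTop :=
    tendsto_inv_nhdsGT_zero.comp h1
  have h3 : Tendsto (fun t => 2 * ‖w t₀‖ * (Real.sqrt (t - t₀))⁻¹) (𝓝[>] t₀) atTop :=
    h2.const_mul_atTop (by positivity)
  simpa [sub_eq_add_neg] using tendsto_atTop_add_const_right _ (-(2*c)) h3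
end

section
/- Let a : [t₀, ∞) → ℝⁿ be bounded measurable and f(t) := ∫_{t₀}^t a(s) √(t - s) ds. Then for every t > t₀, f is differentiable at t with f'(t) = ∫_{t₀}^t a(s)/(2√(t - s)) ds. -/
open MeasureTheory intervalIntegral Set

lemma kfun_eq {u : ℝ} (hu : 0 ≤ u) : (2 * Real.sqrt u)⁻¹ = 2⁻¹ * u ^ (-(1/2) : ℝ) := by
  rcases eq_or_lt_of_le hu with h | h
  · simp [← h]
  · rw [Real.rpow_neg h.le, mul_inv, Real.rpow_def_of_pos h]
    rw [show Real.sqrt u = u ^ (1/2 : ℝ) from Real.sqrt_eq_rpow u, Real.rpow_def_of_pos h]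

lemma I0 {b : ℝ} (hb : 0 ≤ b) : (∫ u in (0:ℝ)..b, (2 * Real.sqrt u)⁻¹) = Real.sqrt b := by
  have hcongr : EqOn (fun u => (2 * Real.sqrt u)⁻¹) (fun u => 2⁻¹ * u ^ (-(1/2) : ℝ)) (uIcc 0 b) := by
    intro u hu
    rw [uIcc_of_le hb] at hu
    exact kfun_eq hu.1
  rw [intervalIntegral.integral_congr hcongr]
  rw [intervalIntegral.integral_const_mul, integral_rpow (Or.inl (by norm_num))]
  rw [Real.sqrt_eq_rpow]
  norm_num
  ring

lemma hIh (p q : ℝ) : IntervalIntegrable (fun u => (2 * Real.sqrt u)⁻¹) volume p q := by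
  have Hpos : ∀ q : ℝ, 0 ≤ q → IntervalIntegrable (fun u => (2 * Real.sqrt u)⁻¹) volume 0 q := by
    intro q hq
    have := (intervalIntegrable_rpow' (a := 0) (b := q) (r := -(1/2)) (by norm_num)).const_mul 2⁻¹
    apply this.congr_ae
    refine (ae_restrict_iff' measurableSet_uIoc).2 (Filter.Eventually.of_forall fun u hu => ?_)
    rw [uIoc_of_le hq] at hu
    exact (kfun_eq hu.1.le).symm
  have Hneg : ∀ p : ℝ, p ≤ 0 → IntervalIntegrable (fun u => (2 * Real.sqrt u)⁻¹) volume p 0 := by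
    intro p hp
    apply IntervalIntegrable.congr_ae (_root_.intervalIntegrable_const (c := (0:ℝ)))
    refine (ae_restrict_iff' measurableSet_uIoc).2 (Filter.Eventually.of_forall fun u hu => ?_)
    rw [uIoc_of_le hp] at hu
    simp [Real.sqrt_eq_zero_of_nonpos hu.2]
  have H0 : ∀ r : ℝ, IntervalIntegrable (fun u => (2 * Real.sqrt u)⁻¹) volume 0 r := by
    intro r
    rcases le_total 0 r with h | h
    · exact Hpos r h
    · exact (Hneg r h).symm
  exact (H0 p).symm.trans (H0 q)

lemma kzero {σ s : ℝ} (h : σ ≤ s) : (2 * Real.sqrt (σ - s))⁻¹ = 0 := by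
  simp [Real.sqrt_eq_zero_of_nonpos (by linarith : σ - s ≤ 0)]

lemma J1 {c σ : ℝ} (h : c ≤ σ) :
    (∫ s in c..σ, (2 * Real.sqrt (σ - s))⁻¹) = Real.sqrt (σ - c) := by
  have := intervalIntegral.integral_comp_sub_left (a := c) (b := σ)
    (fun u => (2 * Real.sqrt u)⁻¹) σ
  rw [this, sub_self, I0 (by linarith)]

lemma J2 {s τ : ℝ} (h : s ≤ τ) :
    (∫ σ in s..τ, (2 * Real.sqrt (σ - s))⁻¹) = Real.sqrt (τ - s) := by
  have := intervalIntegral.integral_comp_sub_right (a := s) (b := τ)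
    (fun u => (2 * Real.sqrt u)⁻¹) s
  rw [this, sub_self, I0 (by linarith)]

lemma kInt1 (σ c d : ℝ) :
    IntervalIntegrable (fun s => (2 * Real.sqrt (σ - s))⁻¹) volume c d := by
  have := (hIh (σ - c) (σ - d)).comp_sub_left σ
  simpa using this

lemma kInt2 (s c d : ℝ) :
    IntervalIntegrable (fun σ => (2 * Real.sqrt (σ - s))⁻¹) volume c d := by
  have := (hIh (c - s) (d - s)).comp_sub_right s
  simpa using this

section Master

variable {n : ℕ} {a : ℝ → EuclideanSpace ℝ (Fin n)} {C : ℝ}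
  (ha : Measurable a) (hC : ∀ s, ‖a s‖ ≤ C)

include ha hC in
lemma KInt (σ c d : ℝ) :
    IntervalIntegrable (fun s => (2 * Real.sqrt (σ - s))⁻¹ • a s) volume c d := by
  have hC0 : 0 ≤ C := le_trans (norm_nonneg _) (hC 0)
  refine IntervalIntegrable.mono_fun ((kInt1 σ c d).const_mul C) ?_ ?_
  · exact (((continuous_const.mul (continuous_const.sub continuous_id).sqrt).measurable).inv.smul
      ha).aestronglyMeasurable
  · refine Filter.Eventually.of_forall fun s => ?_
    show ‖(2 * Real.sqrt (σ - s))⁻¹ • a s‖ ≤ ‖C * (2 * Real.sqrt (σ - s))⁻¹‖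
    have h1 : 0 ≤ (2 * Real.sqrt (σ - s))⁻¹ := by positivity
    rw [norm_smul, Real.norm_eq_abs, abs_of_nonneg h1, Real.norm_eq_abs,
      abs_of_nonneg (by positivity)]
    rw [mul_comm C]
    exact mul_le_mul_of_nonneg_left (hC s) h1

include ha hC in
lemma tail_bound {c σ : ℝ} (h0 : c ≤ σ) :
    ‖∫ s in c..σ, (2 * Real.sqrt (σ - s))⁻¹ • a s‖ ≤ C * Real.sqrt (σ - c) := by
  refine le_trans (intervalIntegral.norm_integral_le_integral_norm h0) ?_
  have h2 : (∫ s in c..σ, ‖(2 * Real.sqrt (σ - s))⁻¹ • a s‖)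
      ≤ ∫ s in c..σ, C * (2 * Real.sqrt (σ - s))⁻¹ := by
    refine intervalIntegral.integral_mono_on h0 ((KInt ha hC σ c σ).norm)
      ((kInt1 σ c σ).const_mul C) fun s _ => ?_
    have h1 : 0 ≤ (2 * Real.sqrt (σ - s))⁻¹ := by positivity
    rw [norm_smul, Real.norm_eq_abs, abs_of_nonneg h1, mul_comm C]
    exact mul_le_mul_of_nonneg_left (hC s) h1
  refine h2.trans ?_
  rw [intervalIntegral.integral_const_mul, J1 h0]

lemma vanish {σ c d : ℝ} (hσc : σ ≤ c) (hcd : c ≤ d) :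
    (∫ s in c..d, (2 * Real.sqrt (σ - s))⁻¹ • a s) = 0 := by
  rw [intervalIntegral.integral_congr (g := fun _ => (0 : EuclideanSpace ℝ (Fin n)))
    (fun s hs => by
      rw [uIcc_of_le hcd] at hs
      rw [kzero (by linarith [hs.1] : σ ≤ s), zero_smul]),
    intervalIntegral.integral_zero]

include ha hC in
lemma g_eq_full {t₀ σ τ : ℝ} (h0 : t₀ ≤ σ) (h1 : σ ≤ τ) :
    (∫ s in t₀..σ, (2 * Real.sqrt (σ - s))⁻¹ • a s)
      = ∫ s in t₀..τ, (2 * Real.sqrt (σ - s))⁻¹ • a s := by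
  rw [← intervalIntegral.integral_add_adjacent_intervals (KInt ha hC σ t₀ σ) (KInt ha hC σ σ τ),
    vanish le_rfl h1, add_zero]

end Master

section Master2

variable {n : ℕ} {a : ℝ → EuclideanSpace ℝ (Fin n)} {C : ℝ}
  (ha : Measurable a) (hC : ∀ s, ‖a s‖ ≤ C)

lemma kvanish {σ c d : ℝ} (hσc : σ ≤ c) (hcd : c ≤ d) :
    (∫ s in c..d, (2 * Real.sqrt (σ - s))⁻¹) = 0 := by
  rw [intervalIntegral.integral_congr (g := fun _ => (0 : ℝ))
    (fun s hs => by
      rw [uIcc_of_le hcd] at hs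
      exact kzero (by linarith [hs.1])),
    intervalIntegral.integral_zero]

include ha hC in
lemma fubini {t₀ τ : ℝ} (ht : t₀ ≤ τ) :
    (∫ σ in t₀..τ, ∫ s in t₀..σ, (2 * Real.sqrt (σ - s))⁻¹ • a s)
      = ∫ s in t₀..τ, Real.sqrt (τ - s) • a s := by
  have hC0 : 0 ≤ C := le_trans (norm_nonneg _) (hC 0)
  set μ := volume.restrict (Ioc t₀ τ) with hμ
  have hK_meas : AEStronglyMeasurable
      (Function.uncurry fun σ s => (2 * Real.sqrt (σ - s))⁻¹ • a s) (μ.prod μ) := by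
    refine Measurable.aestronglyMeasurable ?_
    exact ((continuous_const.mul (continuous_fst.sub continuous_snd).sqrt).measurable.inv.smul
      (ha.comp measurable_snd))
  have hint : Integrable (Function.uncurry fun σ s => (2 * Real.sqrt (σ - s))⁻¹ • a s)
      (μ.prod μ) := by
    rw [integrable_prod_iff hK_meas]
    constructor
    · refine Filter.Eventually.of_forall fun σ => ?_
      have := KInt ha hC σ t₀ τ
      rw [intervalIntegrable_iff_integrableOn_Ioc_of_le ht] at this
      exact this
    · refine Integrable.mono' (integrable_const (C * Real.sqrt (τ - t₀)))
        hK_meas.norm.integral_prod_right' ?_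
      refine (ae_restrict_iff' measurableSet_Ioc).2 (Filter.Eventually.of_forall fun σ hσ => ?_)
      simp only [Function.uncurry_apply_pair]
      have h1 : (∫ s, ‖(2 * Real.sqrt (σ - s))⁻¹ • a s‖ ∂μ)
          = ∫ s in t₀..τ, ‖(2 * Real.sqrt (σ - s))⁻¹ • a s‖ :=
        (intervalIntegral.integral_of_le ht).symm
      rw [Real.norm_eq_abs, abs_of_nonneg (integral_nonneg fun s => norm_nonneg _), h1]
      have h2 : (∫ s in t₀..τ, ‖(2 * Real.sqrt (σ - s))⁻¹ • a s‖)
          ≤ ∫ s in t₀..τ, C * (2 * Real.sqrt (σ - s))⁻¹ := by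
        refine intervalIntegral.integral_mono_on ht (KInt ha hC σ t₀ τ).norm
          ((kInt1 σ t₀ τ).const_mul C) fun s _ => ?_
        have hk : 0 ≤ (2 * Real.sqrt (σ - s))⁻¹ := by positivity
        rw [norm_smul, Real.norm_eq_abs, abs_of_nonneg hk, mul_comm C]
        exact mul_le_mul_of_nonneg_left (hC s) hk
      refine h2.trans ?_
      rw [intervalIntegral.integral_const_mul]
      have h3 : (∫ s in t₀..τ, (2 * Real.sqrt (σ - s))⁻¹) = Real.sqrt (σ - t₀) := by
        rw [← intervalIntegral.integral_add_adjacent_intervals (kInt1 σ t₀ σ) (kInt1 σ σ τ),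
          J1 hσ.1.le, kvanish le_rfl hσ.2, add_zero]
      rw [h3]
      exact mul_le_mul_of_nonneg_left (Real.sqrt_le_sqrt (by linarith [hσ.2])) hC0
  calc (∫ σ in t₀..τ, ∫ s in t₀..σ, (2 * Real.sqrt (σ - s))⁻¹ • a s)
      = ∫ σ in t₀..τ, ∫ s in t₀..τ, (2 * Real.sqrt (σ - s))⁻¹ • a s := by
        refine intervalIntegral.integral_congr fun σ hσ => ?_
        rw [uIcc_of_le ht] at hσ
        exact g_eq_full ha hC hσ.1 hσ.2
    _ = ∫ σ, (∫ s, (2 * Real.sqrt (σ - s))⁻¹ • a s ∂μ) ∂μ := by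
        rw [intervalIntegral.integral_of_le ht]
        simp only [intervalIntegral.integral_of_le ht]
        rfl
    _ = ∫ s, (∫ σ, (2 * Real.sqrt (σ - s))⁻¹ • a s ∂μ) ∂μ := integral_integral_swap hint
    _ = ∫ s in t₀..τ, (∫ σ in t₀..τ, (2 * Real.sqrt (σ - s))⁻¹ • a s) := by
        rw [intervalIntegral.integral_of_le ht]
        simp only [intervalIntegral.integral_of_le ht]
        rfl
    _ = ∫ s in t₀..τ, Real.sqrt (τ - s) • a s := by
        refine intervalIntegral.integral_congr fun s hs => ?_
        rw [uIcc_of_le ht] at hs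
        have hi1 : IntervalIntegrable (fun σ => (2 * Real.sqrt (σ - s))⁻¹ • a s) volume t₀ s :=
          ⟨(kInt2 s t₀ s).1.smul_const (a s), (kInt2 s t₀ s).2.smul_const (a s)⟩
        have hi2 : IntervalIntegrable (fun σ => (2 * Real.sqrt (σ - s))⁻¹ • a s) volume s τ :=
          ⟨(kInt2 s s τ).1.smul_const (a s), (kInt2 s s τ).2.smul_const (a s)⟩
        rw [← intervalIntegral.integral_add_adjacent_intervals hi1 hi2]
        have hz : (∫ σ in t₀..s, (2 * Real.sqrt (σ - s))⁻¹ • a s)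
            = 0 := by
          rw [intervalIntegral.integral_congr (g := fun _ => (0 : EuclideanSpace ℝ (Fin n)))
            (fun σ hσ => by
              rw [uIcc_of_le hs.1] at hσ
              rw [kzero (by linarith [hσ.2]), zero_smul]),
            intervalIntegral.integral_zero]
        rw [hz, zero_add, intervalIntegral.integral_smul_const, J2 hs.2]

end Master2

section Master3

variable {n : ℕ} {a : ℝ → EuclideanSpace ℝ (Fin n)} {C : ℝ}
  (ha : Measurable a) (hC : ∀ s, ‖a s‖ ≤ C)

include ha hC in
lemma g_cont {t₀ σ₀ : ℝ} (h : t₀ < σ₀) :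
    ContinuousAt (fun σ => ∫ s in t₀..σ, (2 * Real.sqrt (σ - s))⁻¹ • a s) σ₀ := by
  have hC0 : 0 ≤ C := le_trans (norm_nonneg _) (hC 0)
  rw [Metric.continuousAt_iff]
  intro ε hε
  set ε₁ : ℝ := min (σ₀ - t₀) ((ε / (3 * (C + 1))) ^ 2 / 2) with hε₁def
  have hε₁pos : 0 < ε₁ := lt_min (by linarith) (by positivity)
  have key : C * Real.sqrt (2 * ε₁) < ε / 3 := by
    have h1 : Real.sqrt (2 * ε₁) ≤ ε / (3 * (C + 1)) := by
      have h2 : 2 * ε₁ ≤ (ε / (3 * (C + 1))) ^ 2 := by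
        have := min_le_right (σ₀ - t₀) ((ε / (3 * (C + 1))) ^ 2 / 2)
        rw [← hε₁def] at this
        linarith
      refine le_trans (Real.sqrt_le_sqrt h2) ?_
      rw [Real.sqrt_sq (by positivity)]
    calc C * Real.sqrt (2 * ε₁) ≤ C * (ε / (3 * (C + 1))) :=
          mul_le_mul_of_nonneg_left h1 hC0
      _ < ε / 3 := by
          have hd0 : 0 < ε / (3 * (C + 1)) := by positivity
          have hd : ε / (3 * (C + 1)) * (3 * (C + 1)) = ε :=
            div_mul_cancel₀ _ (by positivity)
          nlinarith [hd, hd0]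
  set c : ℝ := σ₀ - ε₁ with hcdef
  have hc : t₀ ≤ c := by
    have := min_le_left (σ₀ - t₀) ((ε / (3 * (C + 1))) ^ 2 / 2)
    rw [← hε₁def] at this
    simp only [hcdef]
    linarith
  -- continuity of the truncated integral
  have hG : ContinuousAt (fun σ => ∫ s in t₀..c, (2 * Real.sqrt (σ - s))⁻¹ • a s) σ₀ := by
    refine continuousAt_of_dominated_interval (bound := fun _ => C * (2 * Real.sqrt (ε₁ / 2))⁻¹)
      ?_ ?_ ?_ ?_
    · refine Filter.Eventually.of_forall fun σ => ?_
      exact ((continuous_const.mul (continuous_const.sub continuous_id).sqrt).measurable.inv.smul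
        ha).aestronglyMeasurable
    · have hball : Metric.ball σ₀ (ε₁ / 2) ∈ nhds σ₀ := Metric.ball_mem_nhds σ₀ (by positivity)
      refine Filter.eventually_iff_exists_mem.2 ⟨Metric.ball σ₀ (ε₁ / 2), hball, fun σ hσ => ?_⟩
      refine Filter.Eventually.of_forall fun s hs => ?_
      rw [uIoc_of_le hc] at hs
      have hσs : ε₁ / 2 ≤ σ - s := by
        have h4 : |σ - σ₀| < ε₁ / 2 := by
          rw [Metric.mem_ball, Real.dist_eq] at hσ
          exact hσ
        have h5 := abs_lt.1 h4
        have h6 : s ≤ c := hs.2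
        simp only [hcdef] at h6
        linarith [h5.1]
      have h7 : Real.sqrt (ε₁ / 2) ≤ Real.sqrt (σ - s) := Real.sqrt_le_sqrt hσs
      have h8 : (0:ℝ) < Real.sqrt (ε₁ / 2) := Real.sqrt_pos.2 (by positivity)
      rw [norm_smul, Real.norm_eq_abs, abs_of_nonneg (by positivity)]
      have h9 : (2 * Real.sqrt (σ - s))⁻¹ ≤ (2 * Real.sqrt (ε₁ / 2))⁻¹ := by
        apply inv_anti₀ (by positivity)
        linarith
      calc (2 * Real.sqrt (σ - s))⁻¹ * ‖a s‖ ≤ (2 * Real.sqrt (ε₁ / 2))⁻¹ * C := by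
            apply mul_le_mul h9 (hC s) (norm_nonneg _) (by positivity)
        _ = C * (2 * Real.sqrt (ε₁ / 2))⁻¹ := mul_comm _ _
    · exact intervalIntegrable_const
    · refine Filter.Eventually.of_forall fun s hs => ?_
      rw [uIoc_of_le hc] at hs
      have hlt : s < σ₀ := by
        have := hs.2
        simp only [hcdef] at this
        linarith
      have hne : 2 * Real.sqrt (σ₀ - s) ≠ 0 := by
        have : (0:ℝ) < Real.sqrt (σ₀ - s) := Real.sqrt_pos.2 (by linarith)
        positivity
      exact (((continuous_const.mul (continuous_id.sub
        continuous_const).sqrt).continuousAt.inv₀ hne).smul continuousAt_const)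
  rw [Metric.continuousAt_iff] at hG
  obtain ⟨δ', hδ'pos, hδ'⟩ := hG (ε / 3) (by linarith)
  refine ⟨min δ' (ε₁ / 2), lt_min hδ'pos (by positivity), fun {σ} hσ => ?_⟩
  have hσδ' : dist σ σ₀ < δ' := lt_of_lt_of_le hσ (min_le_left _ _)
  have hσε₁ : |σ - σ₀| < ε₁ / 2 := by
    rw [Real.dist_eq] at hσ
    exact lt_of_lt_of_le hσ (min_le_right _ _)
  have h5 := abs_lt.1 hσε₁
  have hcσ : c ≤ σ := by simp only [hcdef]; linarith
  -- tails
  have tails : ∀ τ : ℝ, c ≤ τ →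
      dist (∫ s in t₀..τ, (2 * Real.sqrt (τ - s))⁻¹ • a s)
        (∫ s in t₀..c, (2 * Real.sqrt (τ - s))⁻¹ • a s) ≤ C * Real.sqrt (τ - c) := by
    intro τ hcτ
    rw [dist_eq_norm]
    have hsplit := intervalIntegral.integral_add_adjacent_intervals
      (KInt ha hC τ t₀ c) (KInt ha hC τ c τ)
    rw [← hsplit]
    simp only [add_sub_cancel_left]
    exact tail_bound ha hC hcτ
  have t1 := tails σ hcσ
  have t2 := tails σ₀ (by simp only [hcdef]; linarith)
  have hGdist := hδ' hσδ'
  have b1 : C * Real.sqrt (σ - c) ≤ C * Real.sqrt (2 * ε₁) := by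
    refine mul_le_mul_of_nonneg_left (Real.sqrt_le_sqrt ?_) hC0
    simp only [hcdef]
    linarith
  have b2 : C * Real.sqrt (σ₀ - c) ≤ C * Real.sqrt (2 * ε₁) := by
    refine mul_le_mul_of_nonneg_left (Real.sqrt_le_sqrt ?_) hC0
    simp only [hcdef]
    linarith
  calc dist (∫ s in t₀..σ, (2 * Real.sqrt (σ - s))⁻¹ • a s)
        (∫ s in t₀..σ₀, (2 * Real.sqrt (σ₀ - s))⁻¹ • a s)
      ≤ dist (∫ s in t₀..σ, (2 * Real.sqrt (σ - s))⁻¹ • a s)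
          (∫ s in t₀..c, (2 * Real.sqrt (σ - s))⁻¹ • a s)
        + dist (∫ s in t₀..c, (2 * Real.sqrt (σ - s))⁻¹ • a s)
            (∫ s in t₀..c, (2 * Real.sqrt (σ₀ - s))⁻¹ • a s)
        + dist (∫ s in t₀..c, (2 * Real.sqrt (σ₀ - s))⁻¹ • a s)
            (∫ s in t₀..σ₀, (2 * Real.sqrt (σ₀ - s))⁻¹ • a s) := dist_triangle4 _ _ _ _
    _ < C * Real.sqrt (2 * ε₁) + ε / 3 + C * Real.sqrt (2 * ε₁) := by
        have h3 : dist (∫ s in t₀..c, (2 * Real.sqrt (σ₀ - s))⁻¹ • a s)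
            (∫ s in t₀..σ₀, (2 * Real.sqrt (σ₀ - s))⁻¹ • a s) ≤ C * Real.sqrt (2 * ε₁) := by
          rw [dist_comm]
          exact t2.trans b2
        exact add_lt_add_of_lt_of_le (add_lt_add_of_le_of_lt (t1.trans b1) hGdist) h3
    _ < ε := by linarith

end Master3

section Master4

variable {n : ℕ} {a : ℝ → EuclideanSpace ℝ (Fin n)} {C : ℝ}
  (ha : Measurable a) (hC : ∀ s, ‖a s‖ ≤ C)

include ha hC in
lemma g_intInt {t₀ t : ℝ} (ht : t₀ < t) :
    IntervalIntegrable (fun σ => ∫ s in t₀..σ, (2 * Real.sqrt (σ - s))⁻¹ • a s) volume t₀ t := by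
  have hC0 : 0 ≤ C := le_trans (norm_nonneg _) (hC 0)
  rw [intervalIntegrable_iff_integrableOn_Ioc_of_le ht.le]
  refine Integrable.mono' (integrable_const (C * Real.sqrt (t - t₀))) ?_ ?_
  · refine ContinuousOn.aestronglyMeasurable ?_ measurableSet_Ioc
    exact fun σ hσ => (g_cont ha hC hσ.1).continuousWithinAt
  · refine (ae_restrict_iff' measurableSet_Ioc).2 (Filter.Eventually.of_forall fun σ hσ => ?_)
    refine (tail_bound ha hC hσ.1.le).trans ?_
    exact mul_le_mul_of_nonneg_left (Real.sqrt_le_sqrt (by linarith [hσ.2])) hC0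

include ha hC in
lemma master {t₀ t : ℝ} (ht : t₀ < t) :
    HasDerivAt (fun τ => ∫ s in t₀..τ, Real.sqrt (τ - s) • a s)
      (∫ s in t₀..t, (2 * Real.sqrt (t - s))⁻¹ • a s) t := by
  set g := fun σ => ∫ s in t₀..σ, (2 * Real.sqrt (σ - s))⁻¹ • a s with hg
  have hg_cont : ∀ σ ∈ Ioi t₀, ContinuousAt g σ := fun σ hσ => g_cont ha hC hσ
  have hmeas := ContinuousAt.stronglyMeasurableAtFilter (μ := volume) isOpen_Ioi hg_cont t ht
  have H := intervalIntegral.integral_hasDerivAt_right (g_intInt ha hC ht) hmeas (hg_cont t ht)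
  refine H.congr_of_eventuallyEq ?_
  filter_upwards [Ioi_mem_nhds ht] with τ hτ
  exact (fubini ha hC (le_of_lt hτ)).symm

end Master4

theorem deriv_of_sqrt_kernel_integral
    (n : ℕ) (t₀ : ℝ)
    (a : ℝ → EuclideanSpace ℝ (Fin n))
    (ha : Measurable a)
    (hbound : ∀ T, ∃ C, ∀ s ∈ Icc t₀ T, ‖a s‖ ≤ C) :
    ∀ t, t₀ < t →
      HasDerivAt (fun τ => ∫ s in t₀..τ, Real.sqrt (τ - s) • a s)
        (∫ s in t₀..t, (2 * Real.sqrt (t - s))⁻¹ • a s) t := by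
  intro t ht
  obtain ⟨C₀, hC₀⟩ := hbound (t + 1)
  set b : ℝ → EuclideanSpace ℝ (Fin n) := (Icc t₀ (t + 1)).indicator a with hbdef
  have hb_meas : Measurable b := ha.indicator measurableSet_Icc
  have hb : ∀ s, ‖b s‖ ≤ max C₀ 0 := by
    intro s
    by_cases hs : s ∈ Icc t₀ (t + 1)
    · rw [hbdef, indicator_of_mem hs]
      exact (hC₀ s hs).trans (le_max_left _ _)
    · rw [hbdef, indicator_of_notMem hs]
      simp
  have H := master hb_meas hb ht
  have hval : (∫ s in t₀..t, (2 * Real.sqrt (t - s))⁻¹ • b s)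
      = ∫ s in t₀..t, (2 * Real.sqrt (t - s))⁻¹ • a s := by
    refine intervalIntegral.integral_congr fun s hs => ?_
    rw [uIcc_of_le ht.le] at hs
    have hmem : s ∈ Icc t₀ (t + 1) := ⟨hs.1, by linarith [hs.2]⟩
    rw [hbdef, indicator_of_mem hmem]
  have heq : (fun τ => ∫ s in t₀..τ, Real.sqrt (τ - s) • a s)
      =ᶠ[nhds t] (fun τ => ∫ s in t₀..τ, Real.sqrt (τ - s) • b s) := by
    filter_upwards [Ioo_mem_nhds ht (lt_add_one t)] with τ hτ
    refine (intervalIntegral.integral_congr fun s hs => ?_)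
    rw [uIcc_of_le hτ.1.le] at hs
    have hmem : s ∈ Icc t₀ (t + 1) := ⟨hs.1, by linarith [hs.2, hτ.2]⟩
    rw [hbdef, indicator_of_mem hmem]
  rw [← hval]
  exact H.congr_of_eventuallyEq heq
end

section
/- Fractional Grönwall inequality (single kernel, β = 1/2): if u : [0,T] → ℝ is nonnegative and continuous, a, b ≥ 0 are constants, and u(t) ≤ a + b ∫_0^t (t-s)^{-1/2} u(s) ds for all t ∈ [0,T), then u is bounded on [0,T); more precisely u(t) ≤ a ∑_{k=0}^∞ (b Γ(1/2))^k t^{k/2} / Γ(k/2 + 1), a convergent series. -/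
set_option maxHeartbeats 1000000

open MeasureTheory intervalIntegral Set Filter

lemma real_beta {p q t : ℝ} (hp : 0 < p) (hq : 0 < q) (ht : 0 < t) :
    ∫ s in (0:ℝ)..t, s ^ (p - 1) * (t - s) ^ (q - 1)
      = Real.Gamma p * Real.Gamma q / Real.Gamma (p + q) * t ^ (p + q - 1) := by
  have hbeta := Complex.Gamma_mul_Gamma_eq_betaIntegral
    (s := (p:ℂ)) (t := (q:ℂ)) (by simpa using hp) (by simpa using hq)
  have hscaled := Complex.betaIntegral_scaled (p:ℂ) (q:ℂ) ht
  have ep : ((p:ℂ) - 1) = ((p - 1 : ℝ) : ℂ) := by push_cast; ring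
  have eq' : ((q:ℂ) - 1) = ((q - 1 : ℝ) : ℂ) := by push_cast; ring
  have epq : ((p:ℂ) + q - 1) = ((p + q - 1 : ℝ) : ℂ) := by push_cast; ring
  have epq' : ((p:ℂ) + q) = ((p + q : ℝ) : ℂ) := by push_cast; ring
  have hcoe : ∫ x in (0:ℝ)..t, (x : ℂ) ^ ((p:ℂ) - 1) * ((t : ℂ) - x) ^ ((q:ℂ) - 1)
      = ((∫ s in (0:ℝ)..t, s ^ (p - 1) * (t - s) ^ (q - 1) : ℝ) : ℂ) := by
    rw [← intervalIntegral.integral_ofReal]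
    refine intervalIntegral.integral_congr fun x hx => ?_
    rw [uIcc_of_le ht.le] at hx
    have h1 : ((t:ℂ) - x) = ((t - x : ℝ) : ℂ) := by push_cast; ring
    rw [ep, eq', h1, ← Complex.ofReal_cpow hx.1,
      ← Complex.ofReal_cpow (by linarith [hx.2] : (0:ℝ) ≤ t - x)]
    push_cast
    ring
  have hGpq : Real.Gamma (p + q) ≠ 0 := (Real.Gamma_pos_of_pos (by linarith)).ne'
  have h2 : ((∫ s in (0:ℝ)..t, s ^ (p - 1) * (t - s) ^ (q - 1) : ℝ) : ℂ)
      = ((Real.Gamma p * Real.Gamma q / Real.Gamma (p + q) * t ^ (p + q - 1) : ℝ) : ℂ) := by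
    rw [← hcoe, hscaled]
    have hB : Complex.betaIntegral p q
        = (Real.Gamma p : ℂ) * Real.Gamma q / Real.Gamma (p + q) := by
      rw [epq', Complex.Gamma_ofReal, Complex.Gamma_ofReal, Complex.Gamma_ofReal] at hbeta
      rw [eq_div_iff (by exact_mod_cast hGpq)]; linear_combination -hbeta
    rw [hB, epq, ← Complex.ofReal_cpow ht.le]
    push_cast
    ring
  exact_mod_cast h2

lemma gamma_factorial_le (j : ℕ) :
    Real.sqrt Real.pi / 2 * j.factorial ≤ Real.Gamma ((j:ℝ) + 3/2) := by
  induction j with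
  | zero =>
      rw [show ((0:ℕ):ℝ) + 3/2 = 1/2 + 1 by norm_num,
        Real.Gamma_add_one (by norm_num), Real.Gamma_one_half_eq]
      simp
      linarith
  | succ j ih =>
      have h1 : (((j+1:ℕ)):ℝ) + 3/2 = ((j:ℝ) + 3/2) + 1 := by push_cast; ring
      rw [h1, Real.Gamma_add_one (by positivity)]
      have hG : 0 < Real.Gamma ((j:ℝ) + 3/2) := Real.Gamma_pos_of_pos (by positivity)
      have hfact : ((j+1).factorial : ℝ) = ((j:ℝ) + 1) * j.factorial := by
        push_cast [Nat.factorial_succ]; ring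
      have hs : 0 ≤ Real.sqrt Real.pi / 2 := by positivity
      have hjf : (0:ℝ) ≤ j.factorial := by positivity
      nlinarith [hG, ih]

lemma summable_phi (c t : ℝ) (hc : 0 ≤ c) (ht : 0 ≤ t) :
    Summable (fun k : ℕ => c ^ k * t ^ ((k : ℝ) / 2) / Real.Gamma ((k : ℝ) / 2 + 1)) := by
  rcases eq_or_lt_of_le ht with h | h
  · -- t = 0 : all terms with k ≥ 1 vanish
    apply summable_of_ne_finset_zero (s := {0})
    intro k hk
    have hk0 : k ≠ 0 := by simpa using hk
    have hkpos : (0:ℝ) < (k:ℝ) := by exact_mod_cast Nat.pos_of_ne_zero hk0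
    rw [← h, Real.zero_rpow (by positivity)]
    simp
  · apply Summable.even_add_odd
    · -- even part
      have he : ∀ j : ℕ, c ^ (2*j) * t ^ (((2*j : ℕ) : ℝ) / 2) / Real.Gamma (((2*j : ℕ) : ℝ) / 2 + 1)
          = (c^2 * t) ^ j / j.factorial := by
        intro j
        have e1 : ((2*j : ℕ) : ℝ) / 2 = (j : ℝ) := by push_cast; ring
        rw [e1, Real.rpow_natCast, Real.Gamma_nat_eq_factorial,
          show c ^ (2*j) = (c^2)^j by rw [pow_mul], ← mul_pow]
      simpa only [he] using Real.summable_pow_div_factorial (c^2 * t)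
    · -- odd part
      apply Summable.of_nonneg_of_le
        (f := fun j => (c * t ^ ((1:ℝ)/2) / (Real.sqrt Real.pi / 2)) * ((c^2*t)^j / j.factorial))
      · intro j
        have : 0 < Real.Gamma (((2*j+1 : ℕ) : ℝ) / 2 + 1) :=
          Real.Gamma_pos_of_pos (by positivity)
        positivity
      · intro j
        have e1 : ((2*j+1 : ℕ) : ℝ) / 2 = (j : ℝ) + 1/2 := by push_cast; ring
        have e2 : ((2*j+1 : ℕ) : ℝ) / 2 + 1 = (j : ℝ) + 3/2 := by push_cast; ring
        have hG := gamma_factorial_le j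
        have hGpos : 0 < Real.Gamma ((j:ℝ) + 3/2) := Real.Gamma_pos_of_pos (by positivity)
        have hnum : c ^ (2*j+1) * t ^ ((j:ℝ) + 1/2) = (c * t ^ ((1:ℝ)/2)) * (c^2*t)^j := by
          rw [Real.rpow_add h, Real.rpow_natCast, pow_succ, pow_mul, mul_pow]
          ring
        rw [e2, e1, hnum]
        have hden : Real.sqrt Real.pi / 2 * j.factorial ≤ Real.Gamma ((j:ℝ) + 3/2) := hG
        have hnn : 0 ≤ (c * t ^ ((1:ℝ)/2)) * (c^2*t)^j := by positivity
        have hsp : (0:ℝ) < Real.sqrt Real.pi / 2 := by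
          have := Real.sqrt_pos.mpr Real.pi_pos
          linarith
        have hjf : (0:ℝ) < j.factorial := by positivity
        calc (c * t ^ ((1:ℝ)/2)) * (c^2*t)^j / Real.Gamma ((j:ℝ) + 3/2)
            ≤ (c * t ^ ((1:ℝ)/2)) * (c^2*t)^j / (Real.sqrt Real.pi / 2 * j.factorial) := by
              gcongr
          _ = (c * t ^ ((1:ℝ)/2) / (Real.sqrt Real.pi / 2)) * ((c^2*t)^j / j.factorial) := by
              field_simp
      · exact (Real.summable_pow_div_factorial (c^2 * t)).mul_left _

lemma ker_intervalIntegrable {t : ℝ} (ht : 0 ≤ t) :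
    IntervalIntegrable (fun s => (t - s) ^ (-(1:ℝ)/2)) volume 0 t := by
  have h := (intervalIntegral.intervalIntegrable_rpow' (a := 0) (b := t)
    (r := -(1:ℝ)/2) (by norm_num)).comp_sub_left t
  simp only [sub_zero, sub_self] at h
  exact h.symm

lemma key_int (k : ℕ) {t : ℝ} (ht : 0 ≤ t) :
    ∫ s in (0:ℝ)..t, (t - s) ^ (-(1:ℝ)/2) * s ^ ((k:ℝ)/2)
      = Real.Gamma ((k:ℝ)/2 + 1) * Real.Gamma (1/2) / Real.Gamma (((k:ℝ)+1)/2 + 1)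
          * t ^ (((k:ℝ)+1)/2) := by
  rcases eq_or_lt_of_le ht with h | h
  · rw [← h]
    rw [Real.zero_rpow (by positivity : (((k:ℝ)+1)/2) ≠ 0)]
    simp
  · have h2 : ∀ s : ℝ, (t - s) ^ (-(1:ℝ)/2) * s ^ ((k:ℝ)/2)
        = s ^ (((k:ℝ)/2 + 1) - 1) * (t - s) ^ ((1/2:ℝ) - 1) := by
      intro s
      norm_num [mul_comm]
    simp only [h2]
    rw [real_beta (by positivity) (by norm_num) h]
    rw [show (k:ℝ)/2 + 1 + 1/2 = ((k:ℝ)+1)/2 + 1 by ring]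
    norm_num

noncomputable def gronPhi (c : ℝ) (k : ℕ) (s : ℝ) : ℝ :=
  c ^ k * s ^ ((k : ℝ) / 2) / Real.Gamma ((k : ℝ) / 2 + 1)

lemma gronPhi_continuous (c : ℝ) (k : ℕ) : Continuous (gronPhi c k) := by
  unfold gronPhi
  rcases Nat.eq_zero_or_pos k with hk | hk
  · subst hk; simpa using continuous_const
  · apply Continuous.div_const
    apply Continuous.mul continuous_const
    refine continuous_iff_continuousAt.mpr fun x => ?_
    have : (0:ℝ) < (k:ℝ) := by exact_mod_cast hk
    exact Real.continuousAt_rpow_const x _ (Or.inr (by positivity))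

lemma gronPhi_zero (c s : ℝ) : gronPhi c 0 s = 1 := by
  simp [gronPhi, Real.Gamma_one]

theorem fractional_gronwall_half_kernel
    (T a b : ℝ) (hT : 0 < T) (ha : 0 ≤ a) (hb : 0 ≤ b)
    (u : ℝ → ℝ)
    (hu : ContinuousOn u (Icc 0 T))
    (hnonneg : ∀ t ∈ Icc 0 T, 0 ≤ u t)
    (hineq : ∀ t ∈ Ico 0 T,
      u t ≤ a + b * ∫ s in (0 : ℝ)..t, (t - s) ^ (-(1 : ℝ) / 2) * u s) :
    ∀ t ∈ Ico 0 T,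
      Summable (fun k : ℕ =>
        (b * Real.Gamma (1 / 2)) ^ k * t ^ ((k : ℝ) / 2) / Real.Gamma ((k : ℝ) / 2 + 1)) ∧
      u t ≤ a * ∑' k : ℕ,
        (b * Real.Gamma (1 / 2)) ^ k * t ^ ((k : ℝ) / 2) / Real.Gamma ((k : ℝ) / 2 + 1) := by
  set c := b * Real.Gamma (1/2) with hcdef
  have hGhalf : 0 < Real.Gamma (1/2) := Real.Gamma_pos_of_pos (by norm_num)
  have hc0 : 0 ≤ c := mul_nonneg hb hGhalf.le
  have hφdef : ∀ k s, gronPhi c k s = c ^ k * s ^ ((k : ℝ) / 2) / Real.Gamma ((k : ℝ) / 2 + 1) :=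
    fun k s => rfl
  -- maximum of u
  obtain ⟨x₀, hx₀mem, hx₀⟩ := isCompact_Icc.exists_isMaxOn
    (Set.nonempty_Icc.mpr hT.le) hu
  set M := u x₀ with hMdef
  have hM : ∀ s ∈ Icc (0:ℝ) T, u s ≤ M := fun s hs => hx₀ hs
  have hM0 : 0 ≤ M := hnonneg x₀ hx₀mem
  -- continuity of gronPhi c k
  have hφcont : ∀ k : ℕ, Continuous (gronPhi c k) := gronPhi_continuous c
  -- integrability of kernel times continuous function
  have hker : ∀ {r : ℝ}, 0 ≤ r →
      IntervalIntegrable (fun s => (r - s) ^ (-(1:ℝ)/2)) volume 0 r :=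
    fun {r} hr => ker_intervalIntegrable hr
  -- key step identity
  have hstep : ∀ (k : ℕ) {r : ℝ}, 0 ≤ r →
      b * ∫ s in (0:ℝ)..r, (r - s) ^ (-(1:ℝ)/2) * gronPhi c k s = gronPhi c (k+1) r := by
    intro k r hr
    have hpull : ∀ s : ℝ, (r - s) ^ (-(1:ℝ)/2) * gronPhi c k s
        = (c ^ k / Real.Gamma ((k:ℝ)/2 + 1)) * ((r - s) ^ (-(1:ℝ)/2) * s ^ ((k:ℝ)/2)) := by
      intro s; simp only [hφdef]; ring
    simp only [hpull]
    rw [intervalIntegral.integral_const_mul, key_int k hr]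
    have hGk : Real.Gamma ((k:ℝ)/2 + 1) ≠ 0 :=
      (Real.Gamma_pos_of_pos (by positivity)).ne'
    have hGk1 : Real.Gamma (((k:ℝ)+1)/2 + 1) ≠ 0 :=
      (Real.Gamma_pos_of_pos (by positivity)).ne'
    simp only [hφdef]
    rw [show (((k+1:ℕ)):ℝ) = (k:ℝ) + 1 by push_cast; ring]
    field_simp [hcdef]
    ring
  -- main induction
  have main : ∀ n : ℕ, ∀ r ∈ Ico (0:ℝ) T,
      u r ≤ a * (∑ k ∈ Finset.range n, gronPhi c k r) + M * gronPhi c n r := by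
    intro n
    induction n with
    | zero =>
        intro r hr
        have : gronPhi c 0 r = 1 := by
          simp [hφdef, Real.Gamma_one]
        simpa [this] using hM r ⟨hr.1, hr.2.le⟩
    | succ n ih =>
        intro r hr
        have hr0 : 0 ≤ r := hr.1
        have hucont : ContinuousOn u (uIcc 0 r) := by
          rw [uIcc_of_le hr0]
          exact hu.mono (Icc_subset_Icc le_rfl hr.2.le)
        have hint1 : IntervalIntegrable (fun s => (r - s) ^ (-(1:ℝ)/2) * u s) volume 0 r :=
          (hker hr0).mul_continuousOn hucont
        have hφint : ∀ k : ℕ,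
            IntervalIntegrable (fun s => (r - s) ^ (-(1:ℝ)/2) * gronPhi c k s) volume 0 r :=
          fun k => (hker hr0).mul_continuousOn (hφcont k).continuousOn
        set g : ℝ → ℝ := fun s => a * (∑ k ∈ Finset.range n, gronPhi c k s) + M * gronPhi c n s with hgdef
        have hgsplit : (fun s => (r - s) ^ (-(1:ℝ)/2) * g s)
            = fun s => a * (∑ k ∈ Finset.range n, (r - s) ^ (-(1:ℝ)/2) * gronPhi c k s)
                + M * ((r - s) ^ (-(1:ℝ)/2) * gronPhi c n s) := by
          funext s
          simp only [hgdef, mul_add, Finset.mul_sum]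
          congr 1
          · exact Finset.sum_congr rfl fun k _ => by ring
          · ring
        have hsumint : IntervalIntegrable
            (fun s => ∑ k ∈ Finset.range n, (r - s) ^ (-(1:ℝ)/2) * gronPhi c k s) volume 0 r := by
          have := IntervalIntegrable.sum
            (f := fun (k : ℕ) (s : ℝ) => (r - s) ^ (-(1:ℝ)/2) * gronPhi c k s)
            (Finset.range n) (fun k _ => hφint k)
          simpa [← Finset.sum_fn] using this
        have hint2 : IntervalIntegrable (fun s => (r - s) ^ (-(1:ℝ)/2) * g s) volume 0 r := by
          rw [hgsplit]
          exact (hsumint.const_mul a).add ((hφint n).const_mul M)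
        have hmono : (∫ s in (0:ℝ)..r, (r - s) ^ (-(1:ℝ)/2) * u s)
            ≤ ∫ s in (0:ℝ)..r, (r - s) ^ (-(1:ℝ)/2) * g s := by
          apply intervalIntegral.integral_mono_on hr0 hint1 hint2
          intro s hs
          have hksnn : 0 ≤ (r - s) ^ (-(1:ℝ)/2) :=
            Real.rpow_nonneg (by linarith [hs.2]) _
          exact mul_le_mul_of_nonneg_left
            (ih s ⟨hs.1, lt_of_le_of_lt hs.2 hr.2⟩) hksnn
        have hval : b * ∫ s in (0:ℝ)..r, (r - s) ^ (-(1:ℝ)/2) * g s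
            = a * (∑ k ∈ Finset.range n, gronPhi c (k+1) r) + M * gronPhi c (n+1) r := by
          rw [hgsplit, intervalIntegral.integral_add (hsumint.const_mul a)
            ((hφint n).const_mul M), intervalIntegral.integral_const_mul,
            intervalIntegral.integral_const_mul,
            intervalIntegral.integral_finset_sum (fun k _ => hφint k)]
          rw [mul_add]
          congr 1
          · have h1 : ∑ k ∈ Finset.range n, gronPhi c (k+1) r
                = ∑ k ∈ Finset.range n,
                    b * ∫ s in (0:ℝ)..r, (r - s) ^ (-(1:ℝ)/2) * gronPhi c k s :=
              Finset.sum_congr rfl (fun k _ => (hstep k hr0).symm)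
            rw [h1, ← Finset.mul_sum]
            ring
          · rw [← hstep n hr0]
            ring
        calc u r ≤ a + b * ∫ s in (0:ℝ)..r, (r - s) ^ (-(1:ℝ)/2) * u s := hineq r hr
          _ ≤ a + b * ∫ s in (0:ℝ)..r, (r - s) ^ (-(1:ℝ)/2) * g s := by
              have := mul_le_mul_of_nonneg_left hmono hb
              linarith
          _ = a + (a * (∑ k ∈ Finset.range n, gronPhi c (k+1) r) + M * gronPhi c (n+1) r) := by rw [hval]
          _ = a * (∑ k ∈ Finset.range (n+1), gronPhi c k r) + M * gronPhi c (n+1) r := by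
              rw [Finset.sum_range_succ']
              have : gronPhi c 0 r = 1 := by simp [hφdef, Real.Gamma_one]
              rw [this]
              ring
  intro t htmem
  have hsum : Summable (fun k : ℕ => gronPhi c k t) := summable_phi c t hc0 htmem.1
  refine ⟨hsum, ?_⟩
  have htends : Tendsto (fun n => a * (∑ k ∈ Finset.range n, gronPhi c k t) + M * gronPhi c n t)
      atTop (nhds (a * (∑' k, gronPhi c k t) + M * 0)) :=
    ((hsum.hasSum.tendsto_sum_nat).const_mul a).add (hsum.tendsto_atTop_zero.const_mul M)
  have := ge_of_tendsto' htends (fun n => main n t htmem)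
  simpa [hφdef] using this
end
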